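/- Let C be a category with pullbacks and let α : c → c' be a morphism in C. In the bicategory of spans of C, the span (c ← c → c') with left leg the identity and right leg α is left adjoint to the span (c' ← c → c) with left leg α and right leg the identity. The counit of this adjunction is the 2-morphism of spans from the composite span (c' ← c → c') (both legs: left leg α, right leg α) to the identity span of c', given by the map α : c → c'; the unit is the 2-morphism from the identity span of c to (c ← c ×_{c'} c → c) given by the diagonal map c → c ×_{c'} c. -/

import Mathlib

open CategoryTheory CategoryTheory.Limits

attribute [simp] pullback.lift_fst pullback.lift_snd pullback.lift_fst_assoc pullback.lift_snd_assoc

universe v u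

variable (C : Type u) [Category.{v} C]

/-- A span from `c` to `c'`: an apex with two legs. -/
structure SpanC (c c' : C) : Type max u v where
  apex : C
  l : apex ⟶ c
  r : apex ⟶ c'

variable {C}

/-- Morphisms of spans are maps of apexes commuting with the legs. -/
instance SpanC.category {c c' : C} : Category (SpanC C c c') where
  Hom S T := {φ : S.apex ⟶ T.apex // φ ≫ T.l = S.l ∧ φ ≫ T.r = S.r}
  id S := ⟨𝟙 _, Category.id_comp _, Category.id_comp _⟩
  comp φ ψ := ⟨φ.1 ≫ ψ.1, by rw [Category.assoc, ψ.2.1, φ.2.1], by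
    rw [Category.assoc, ψ.2.2, φ.2.2]⟩
  id_comp φ := Subtype.ext (Category.id_comp _)
  comp_id φ := Subtype.ext (Category.comp_id _)
  assoc φ ψ ξ := Subtype.ext (Category.assoc _ _ _)

namespace SpanC

@[ext]
lemma hom_ext {c c' : C} {S T : SpanC C c c'} (φ ψ : S ⟶ T) (h : φ.1 = ψ.1) : φ = ψ :=
  Subtype.ext h

@[simp]
lemma comp_val {c c' : C} {S T U : SpanC C c c'} (φ : S ⟶ T) (ψ : T ⟶ U) :
    (φ ≫ ψ).1 = φ.1 ≫ ψ.1 := rfl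

@[simp]
lemma id_val {c c' : C} (S : SpanC C c c') : (𝟙 S : S ⟶ S).1 = 𝟙 S.apex := rfl

@[simp]
lemma w_l {c c' : C} {S T : SpanC C c c'} (φ : S ⟶ T) : φ.1 ≫ T.l = S.l := φ.2.1

@[simp]
lemma w_r {c c' : C} {S T : SpanC C c c'} (φ : S ⟶ T) : φ.1 ≫ T.r = S.r := φ.2.2

/-- The identity span. -/
def idSpan (c : C) : SpanC C c c := ⟨c, 𝟙 c, 𝟙 c⟩

/-- The span `a ← a → b` with identity left leg, image of `f` under `ι : C → Span(C)`. -/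
def iota {a b : C} (f : a ⟶ b) : SpanC C a b := ⟨a, 𝟙 a, f⟩

/-- The reversed span `b ← a → a`, image of `f` under `ι^R : Cᵒᵖ → Span(C)`. -/
def iotaR {a b : C} (f : a ⟶ b) : SpanC C b a := ⟨a, f, 𝟙 a⟩

variable [HasPullbacks C]

/-- Composition of spans, by pullback. -/
noncomputable def hcomp {c c' c'' : C} (S : SpanC C c c') (T : SpanC C c' c'') :
    SpanC C c c'' :=
  ⟨pullback S.r T.l, pullback.fst S.r T.l ≫ S.l, pullback.snd S.r T.l ≫ T.r⟩

@[simp] lemma hcomp_apex {c c' c'' : C} (S : SpanC C c c') (T : SpanC C c' c'') :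
    (hcomp S T).apex = pullback S.r T.l := rfl

@[simp] lemma hcomp_l {c c' c'' : C} (S : SpanC C c c') (T : SpanC C c' c'') :
    (hcomp S T).l = pullback.fst S.r T.l ≫ S.l := rfl

@[simp] lemma hcomp_r {c c' c'' : C} (S : SpanC C c c') (T : SpanC C c' c'') :
    (hcomp S T).r = pullback.snd S.r T.l ≫ T.r := rfl

/-- Horizontal composition of 2-cells. -/
noncomputable def hcompMap {c c' c'' : C} {S S' : SpanC C c c'} {T T' : SpanC C c' c''}
    (φ : S ⟶ S') (ψ : T ⟶ T') : hcomp S T ⟶ hcomp S' T' :=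
  ⟨pullback.map S.r T.l S'.r T'.l φ.1 ψ.1 (𝟙 c') (by simp) (by simp),
    by simp, by simp⟩

@[simp]
lemma hcompMap_val {c c' c'' : C} {S S' : SpanC C c c'} {T T' : SpanC C c' c''}
    (φ : S ⟶ S') (ψ : T ⟶ T') :
    (hcompMap φ ψ).1 = pullback.map S.r T.l S'.r T'.l φ.1 ψ.1 (𝟙 c') (by simp) (by simp) :=
  rfl

/-- Left whiskering. -/
noncomputable def whiskL {c c' c'' : C} (S : SpanC C c c') {T T' : SpanC C c' c''}
    (ψ : T ⟶ T') : hcomp S T ⟶ hcomp S T' :=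
  hcompMap (𝟙 S) ψ

/-- Right whiskering. -/
noncomputable def whiskR {c c' c'' : C} {S S' : SpanC C c c'} (φ : S ⟶ S')
    (T : SpanC C c' c'') : hcomp S T ⟶ hcomp S' T :=
  hcompMap φ (𝟙 T)

/-- A span morphism with invertible underlying morphism is an isomorphism of spans. -/
noncomputable def isoOfIsIso {c c' : C} {S T : SpanC C c c'} (φ : S ⟶ T) [IsIso φ.1] :
    S ≅ T where
  hom := φ
  inv := ⟨inv φ.1, by rw [IsIso.inv_comp_eq]; exact φ.2.1.symm, by
    rw [IsIso.inv_comp_eq]; exact φ.2.2.symm⟩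
  hom_inv_id := by ext; simp
  inv_hom_id := by ext; simp

/-- Horizontal composition of invertible 2-cells. -/
noncomputable def hcompIso {c c' c'' : C} {S S' : SpanC C c c'} {T T' : SpanC C c' c''}
    (e₁ : S ≅ S') (e₂ : T ≅ T') : hcomp S T ≅ hcomp S' T' :=
  haveI : IsIso e₁.hom.1 := ⟨e₁.inv.1, congrArg Subtype.val e₁.hom_inv_id,
    congrArg Subtype.val e₁.inv_hom_id⟩
  haveI : IsIso e₂.hom.1 := ⟨e₂.inv.1, congrArg Subtype.val e₂.hom_inv_id,
    congrArg Subtype.val e₂.inv_hom_id⟩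
  haveI : IsIso (hcompMap e₁.hom e₂.hom).1 := by rw [hcompMap_val]; exact pullback.map_isIso _ _ _ _ _ _ _ _ _
  isoOfIsIso (hcompMap e₁.hom e₂.hom)

/-- The left unitor. -/
noncomputable def unitorL {c c' : C} (S : SpanC C c c') : hcomp (idSpan c) S ≅ S where
  hom := ⟨pullback.snd (idSpan c).r S.l, by
      simpa [idSpan] using (pullback.condition (f := (idSpan c).r) (g := S.l)).symm, by simp [idSpan]⟩
  inv := ⟨pullback.lift (f := (idSpan c).r) (g := S.l) S.l (𝟙 _) (by simp [idSpan]),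
    (pullback.lift_fst_assoc _ _ _ _).trans (Category.comp_id _),
    (pullback.lift_snd_assoc _ _ _ _).trans (Category.id_comp _)⟩
  hom_inv_id := by
    ext
    rw [comp_val, id_val]
    apply pullback.hom_ext
    · exact (Category.assoc _ _ _).trans
        ((congrArg (pullback.snd (idSpan c).r S.l ≫ ·) (pullback.lift_fst _ _ _)).trans
          (((pullback.condition (f := (idSpan c).r) (g := S.l)).symm.trans
            (Category.comp_id _)).trans (Category.id_comp _).symm))
    · exact (Category.assoc _ _ _).trans
        ((congrArg (pullback.snd (idSpan c).r S.l ≫ ·) (pullback.lift_snd _ _ _)).trans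
          ((Category.comp_id _).trans (Category.id_comp _).symm))
  inv_hom_id := by ext; rw [comp_val, id_val]; exact pullback.lift_snd _ _ _

/-- The right unitor. -/
noncomputable def unitorR {c c' : C} (S : SpanC C c c') : hcomp S (idSpan c') ≅ S where
  hom := ⟨pullback.fst S.r (idSpan c').l, by simp [idSpan], by
      simpa [idSpan] using pullback.condition (f := S.r) (g := (idSpan c').l)⟩
  inv := ⟨pullback.lift (f := S.r) (g := (idSpan c').l) (𝟙 _) S.r (by simp [idSpan]),
    (pullback.lift_fst_assoc _ _ _ _).trans (Category.id_comp _),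
    (pullback.lift_snd_assoc _ _ _ _).trans (Category.comp_id _)⟩
  hom_inv_id := by
    ext
    rw [comp_val, id_val]
    apply pullback.hom_ext
    · exact (Category.assoc _ _ _).trans
        ((congrArg (pullback.fst S.r (idSpan c').l ≫ ·) (pullback.lift_fst _ _ _)).trans
          ((Category.comp_id _).trans (Category.id_comp _).symm))
    · exact (Category.assoc _ _ _).trans
        ((congrArg (pullback.fst S.r (idSpan c').l ≫ ·) (pullback.lift_snd _ _ _)).trans
          (((pullback.condition (f := S.r) (g := (idSpan c').l)).trans
            (Category.comp_id _)).trans (Category.id_comp _).symm))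
  inv_hom_id := by ext; rw [comp_val, id_val]; exact pullback.lift_fst _ _ _

/-- The associator. -/
noncomputable def assocIso {c c' c'' c''' : C} (S : SpanC C c c') (T : SpanC C c' c'')
    (U : SpanC C c'' c''') : hcomp (hcomp S T) U ≅ hcomp S (hcomp T U) where
  hom := ⟨(pullbackAssoc S.r T.l T.r U.l).hom, by simp, by simp⟩
  inv := ⟨(pullbackAssoc S.r T.l T.r U.l).inv, by simp, by simp⟩
  hom_inv_id := by ext; rw [comp_val, id_val]; exact Iso.hom_inv_id _
  inv_hom_id := by ext; rw [comp_val, id_val]; exact Iso.inv_hom_id _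

/-- The triangle identities exhibiting `f ⊣ g` in the bicategory of spans, with unit `η`
and counit `ε`. -/
noncomputable def IsSpanAdjunction {c c' : C} (f : SpanC C c c') (g : SpanC C c' c)
    (η : idSpan c ⟶ hcomp f g) (ε : hcomp g f ⟶ idSpan c') : Prop :=
  ((unitorL f).inv ≫ whiskR η f ≫ (assocIso f g f).hom ≫ whiskL f ε ≫ (unitorR f).hom
      = 𝟙 f) ∧
  ((unitorR g).inv ≫ whiskL g η ≫ (assocIso g f g).inv ≫ whiskR ε g ≫ (unitorL g).hom
      = 𝟙 g)

end SpanC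

namespace SpanC

variable {C : Type u} [Category.{v} C] [HasPullbacks C]

/-- The unit of the adjunction `ι(α) ⊣ ι^R(α)`: the diagonal map `c → c ×_{c'} c` as a
2-cell from the identity span of `c` to the composite `ι(α) ≫ ι^R(α)`. -/
noncomputable def spanUnit {c c' : C} (α : c ⟶ c') : idSpan c ⟶ hcomp (iota α) (iotaR α) :=
  ⟨pullback.lift (f := (iota α).r) (g := (iotaR α).l) (𝟙 c) (𝟙 c) rfl,
    (pullback.lift_fst_assoc _ _ _ _).trans (Category.comp_id _),
    (pullback.lift_snd_assoc _ _ _ _).trans (Category.comp_id _)⟩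

/-- The counit of the adjunction `ι(α) ⊣ ι^R(α)`: the map `α : c → c'` as a 2-cell from the
composite `ι^R(α) ≫ ι(α)` to the identity span of `c'`. -/
noncomputable def spanCounit {c c' : C} (α : c ⟶ c') :
    hcomp (iotaR α) (iota α) ⟶ idSpan c' :=
  ⟨pullback.fst (iotaR α).r (iota α).l ≫ α, by simp [iota, iotaR, idSpan], by
    have hc := pullback.condition (f := (iotaR α).r) (g := (iota α).l)
    simp only [iota, iotaR, Category.comp_id] at hc
    simp [iota, iotaR, idSpan, hc]⟩

end SpanC

open SpanC in
/-- For any arrow `α : c ⟶ c'` of `C`, the span `ι(α) = (c ← c → c')` (identity left leg,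
right leg `α`) is left adjoint to `ι^R(α) = (c' ← c → c)` in the bicategory of spans, with
unit the diagonal `c → c ×_{c'} c` and counit given by `α : c → c'`. -/
theorem iota_adjunction_iotaR {C : Type u} [Category.{v} C] [HasPullbacks C]
    {c c' : C} (α : c ⟶ c') :
    IsSpanAdjunction (iota α) (iotaR α) (spanUnit α) (spanCounit α) := by
  constructor
  · ext
    simp only [comp_val, id_val]
    dsimp only [unitorL, unitorR, assocIso, whiskL, whiskR, spanUnit, spanCounit, hcompMap]
    simp [pullback.map]
    erw [pullback.lift_fst_assoc]
    simp [iota, iotaR, idSpan]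
    erw [pullback.lift_fst_assoc, Category.id_comp, pullback.lift_fst]
  · ext
    simp only [comp_val, id_val]
    dsimp only [unitorL, unitorR, assocIso, whiskL, whiskR, spanUnit, spanCounit, hcompMap]
    simp [pullback.map]
    erw [pullback.lift_snd_assoc]
    simp [iota, iotaR, idSpan]
    erw [pullback.lift_snd_assoc, Category.id_comp, pullback.lift_snd]
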